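/- arXiv:1309.2178 — 4 statements merged into one kernel-verified Lean document; each statement's English description precedes it below -/
import Mathlib

section
/- If x : ℝ → ℝ is C¹ and the span V of its translates is finite-dimensional, then x' lies in the closure properties of V in the following sense: x' also has translates spanning a subspace of dimension at most dim V. -/
/-!
Every element of the span `V` of the translates of `x` is differentiable, so differentiation is a
linear map on `V`; it sends the translate `u ↦ x (t + u)` to `u ↦ x' (t + u)`. Hence the span of
the translates of `x'` lies in the image of `V` under a linear map, whose dimension is at most
`dim V`.
-/

theorem Submodule.finiteDimensional_and_finrank_le_of_le_range {K M N : Type*} [DivisionRing K]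
    [AddCommGroup M] [Module K M] [AddCommGroup N] [Module K N]
    {V : Submodule K M} [FiniteDimensional K V] {W : Submodule K N} (L : V →ₗ[K] N)
    (hW : W ≤ LinearMap.range L) :
    FiniteDimensional K W ∧ Module.finrank K W ≤ Module.finrank K V :=
  ⟨Submodule.finiteDimensional_of_le hW,
    (Submodule.finrank_mono hW).trans (LinearMap.finrank_range_le L)⟩

section Translates

variable {𝕜 F : Type*} [NontriviallyNormedField 𝕜] [NormedAddCommGroup F] [NormedSpace 𝕜 F]

variable (𝕜 F) in
def differentiableSubmodule : Submodule 𝕜 (𝕜 → F) where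
  carrier := {f | Differentiable 𝕜 f}
  add_mem' hf hg := hf.add hg
  zero_mem' := differentiable_const 0
  smul_mem' c _ hf := hf.const_smul c

noncomputable def derivOn (V : Submodule 𝕜 (𝕜 → F)) (hV : V ≤ differentiableSubmodule 𝕜 F) :
    V →ₗ[𝕜] (𝕜 → F) where
  toFun f := deriv (f : 𝕜 → F)
  map_add' f g := funext fun u => deriv_add (hV f.2 u) (hV g.2 u)
  map_smul' c f := funext fun u => deriv_const_smul c (hV f.2 u)

def translateSpan (x : 𝕜 → F) : Submodule 𝕜 (𝕜 → F) :=
  Submodule.span 𝕜 {f | ∃ t : 𝕜, f = fun u => x (t + u)}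

theorem translate_mem_translateSpan (x : 𝕜 → F) (t : 𝕜) :
    (fun u => x (t + u)) ∈ translateSpan x :=
  Submodule.subset_span ⟨t, rfl⟩

theorem translateSpan_le_differentiableSubmodule {x : 𝕜 → F} (hx : Differentiable 𝕜 x) :
    translateSpan x ≤ differentiableSubmodule 𝕜 F := by
  refine Submodule.span_le.2 ?_
  rintro f ⟨t, rfl⟩
  exact hx.comp ((differentiable_const t).add differentiable_id)

theorem translateSpan_deriv_le_range_derivOn {x : 𝕜 → F} (hx : Differentiable 𝕜 x) :
    translateSpan (deriv x) ≤
      LinearMap.range (derivOn (translateSpan x) (translateSpan_le_differentiableSubmodule hx)) := by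
  refine Submodule.span_le.2 ?_
  rintro f ⟨t, rfl⟩
  exact ⟨⟨_, translate_mem_translateSpan x t⟩, funext fun u => deriv_comp_const_add x t u⟩

end Translates

theorem stmt4 (x : ℝ → ℝ) (hx : ContDiff ℝ 1 x)
    (V V' : Submodule ℝ (ℝ → ℝ))
    (hV : V = Submodule.span ℝ {f : ℝ → ℝ | ∃ t : ℝ, f = fun u => x (t + u)})
    (hV' : V' = Submodule.span ℝ {f : ℝ → ℝ | ∃ t : ℝ, f = fun u => deriv x (t + u)})
    (hfin : FiniteDimensional ℝ V) :
    FiniteDimensional ℝ V' ∧ Module.finrank ℝ V' ≤ Module.finrank ℝ V := by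
  change V = translateSpan x at hV
  change V' = translateSpan (deriv x) at hV'
  subst hV hV'
  exact Submodule.finiteDimensional_and_finrank_le_of_le_range _
    (translateSpan_deriv_le_range_derivOn (hx.differentiable one_ne_zero))
end

section
/- Conversely, if x : ℝ → ℝ is smooth and there exist K and functions ζ_k, η_k (with the η_k smooth and linearly independent) such that x(t+u) = Σ_{k=1}^K ζ_k(t) η_k(u) for all t, u ∈ ℝ, then x satisfies some linear constant-coefficient ODE of order at most K: there exist a_0,…,a_{K-1} ∈ ℝ with x^{(K)}(t) = Σ_{j=0}^{K-1} a_j x^{(j)}(t) for all t. -/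
open Set Submodule

private lemma itd_zero_fun (n : ℕ) : iteratedDeriv n (fun _ : ℝ => (0:ℝ)) = fun _ => (0:ℝ) := by
  induction n with
  | zero => simp [iteratedDeriv_zero]
  | succ n ih =>
      rw [iteratedDeriv_succ, ih]
      exact funext fun t => deriv_const t 0

private lemma itd_add' {n : ℕ} {f g : ℝ → ℝ} (hf : ContDiff ℝ (n:ℕ∞) f) (hg : ContDiff ℝ (n:ℕ∞) g)
    (t : ℝ) : iteratedDeriv n (fun u => f u + g u) t
      = iteratedDeriv n f t + iteratedDeriv n g t := by
  simp only [← iteratedDerivWithin_univ]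
  exact iteratedDerivWithin_add (Set.mem_univ t) uniqueDiffOn_univ hf.contDiffWithinAt hg.contDiffWithinAt

private lemma itd_cmul {n : ℕ} {f : ℝ → ℝ} (hf : ContDiff ℝ (n:ℕ∞) f) (c t : ℝ) :
    iteratedDeriv n (fun u => c * f u) t = c * iteratedDeriv n f t := by
  simp only [← iteratedDerivWithin_univ]
  exact iteratedDerivWithin_const_mul (Set.mem_univ t) uniqueDiffOn_univ c hf.contDiffWithinAt

private lemma itd_sum {ι : Type*} (s : Finset ι) (f : ι → ℝ → ℝ)
    (h : ∀ i, ContDiff ℝ (⊤ : ℕ∞) (f i)) (n : ℕ) (t : ℝ) :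
    iteratedDeriv n (fun u => ∑ i ∈ s, f i u) t = ∑ i ∈ s, iteratedDeriv n (f i) t := by
  classical
  induction s using Finset.induction with
  | empty => simp [itd_zero_fun n]
  | @insert a s ha ih =>
      
      simp only [Finset.sum_insert ha]
      rw [← ih, itd_add' ((h a).of_le (by exact_mod_cast le_top)) ?_ t]
      · exact ContDiff.sum fun i _ => (h i).of_le (by exact_mod_cast le_top)

theorem stmt6 (K : ℕ) (x : ℝ → ℝ) (ζ η : Fin K → ℝ → ℝ)
    (hx : ContDiff ℝ (⊤ : ℕ∞) x) (hη : ∀ k, ContDiff ℝ (⊤ : ℕ∞) (η k))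
    (hind : LinearIndependent ℝ η)
    (hfact : ∀ t u : ℝ, x (t + u) = ∑ k, ζ k t * η k u) :
    ∃ a : Fin K → ℝ,
      ∀ t : ℝ, iteratedDeriv K x t = ∑ j : Fin K, a j * iteratedDeriv j x t := by
  classical
  set F : ℕ → ℝ → ℝ := fun n => iteratedDeriv n x with hF
  have hFd : ∀ n, Differentiable ℝ (F n) := by
    intro n
    exact hx.differentiable_iteratedDeriv n (by exact_mod_cast ENat.natCast_lt_top n)
  -- each derivative is a combination of the ζ's
  have hFval : ∀ n t, F n t = ∑ k, iteratedDeriv n (η k) 0 * ζ k t := by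
    intro n t
    have h1 : (fun u => x (t + u)) = fun u => ∑ k, ζ k t * η k u :=
      funext fun u => hfact t u
    have h2 : iteratedDeriv n (fun u => x (t + u)) 0 = iteratedDeriv n x t := by
      rw [iteratedDeriv_comp_const_add]; simp
    calc F n t = iteratedDeriv n (fun u => x (t + u)) 0 := h2.symm
      _ = iteratedDeriv n (fun u => ∑ k, ζ k t * η k u) 0 := by rw [h1]
      _ = ∑ k, iteratedDeriv n (fun u => ζ k t * η k u) 0 :=
          itd_sum _ _ (fun k => contDiff_const.mul (hη k)) n 0
      _ = ∑ k, iteratedDeriv n (η k) 0 * ζ k t := by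
          refine Finset.sum_congr rfl fun k _ => ?_
          rw [itd_cmul ((hη k).of_le (by exact_mod_cast le_top))]; ring
  have hFS : ∀ n, F n ∈ Submodule.span ℝ (Set.range ζ) := by
    intro n
    rw [mem_span_range_iff_exists_fun]
    refine ⟨fun k => iteratedDeriv n (η k) 0, funext fun t => ?_⟩
    simp only [Finset.sum_apply, Pi.smul_apply, smul_eq_mul]
    exact (hFval n t).symm
  -- the K+1 functions F 0, ..., F K are linearly dependent
  have hfin : Module.Finite ℝ (Submodule.span ℝ (Set.range ζ)) :=
    Module.Finite.span_of_finite ℝ (Set.finite_range ζ)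
  have hrank : Module.finrank ℝ (Submodule.span ℝ (Set.range ζ)) ≤ K := by
    simpa [Set.finrank] using finrank_range_le_card (R := ℝ) ζ
  have hdep : ¬ LinearIndependent ℝ (fun j : Fin (K+1) => F (j:ℕ)) := by
    intro h
    have h2 : LinearIndependent ℝ
        (fun j : Fin (K+1) => (⟨F (j:ℕ), hFS j⟩ : Submodule.span ℝ (Set.range ζ))) := by
      apply LinearIndependent.of_comp (Submodule.span ℝ (Set.range ζ)).subtype
      exact h
    have h3 := h2.fintype_card_le_finrank
    simp only [Fintype.card_fin] at h3
    omega
  -- some F m is in the span of the previous ones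
  have hex : ∃ m, m ≤ K ∧ F m ∈ Submodule.span ℝ (Set.range fun j : Fin m => F (j:ℕ)) := by
    by_contra hc
    push_neg at hc
    have hli : ∀ n, n ≤ K + 1 → LinearIndependent ℝ (fun j : Fin n => F (j:ℕ)) := by
      intro n
      induction n with
      | zero => intro _; exact linearIndependent_empty_type
      | succ n ih =>
        intro hn
        have hinit : (Fin.init fun j : Fin (n+1) => F (j:ℕ)) = fun j : Fin n => F (j:ℕ) := by
          funext j; simp [Fin.init]
        rw [linearIndependent_fin_succ', hinit]
        refine ⟨ih (Nat.le_of_succ_le hn), ?_⟩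
        simpa using hc n (Nat.succ_le_succ_iff.mp hn)
    exact hdep (hli (K+1) le_rfl)
  obtain ⟨m, hmK, hmem⟩ := hex
  set V := Submodule.span ℝ (Set.range fun j : Fin m => F (j:ℕ)) with hV
  have hgen : ∀ j : ℕ, j < m → F j ∈ V := fun j hj => Submodule.subset_span ⟨⟨j, hj⟩, rfl⟩
  have hsucc : ∀ j : ℕ, j < m → F (j+1) ∈ V := by
    intro j hj
    rcases lt_or_eq_of_le (Nat.succ_le_of_lt hj) with h | h
    · exact hgen _ h
    · rw [show j + 1 = m from h]; exact hmem
  have hderiv_mem : ∀ g : ℝ → ℝ, g ∈ V → (fun t => deriv g t) ∈ V := by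
    intro g hg
    rw [hV, mem_span_range_iff_exists_fun] at hg
    obtain ⟨c, hcsum⟩ := hg
    have hgeq : g = fun t => ∑ j : Fin m, c j * F (j:ℕ) t := by
      rw [← hcsum]; funext t; simp [Finset.sum_apply]
    have hd : (fun t => deriv g t) = fun t => ∑ j : Fin m, c j * F ((j:ℕ)+1) t := by
      funext t
      rw [hgeq, deriv_fun_sum (fun (j : Fin m) _ => ((hFd (j:ℕ)).differentiableAt).const_mul (c j))]
      refine Finset.sum_congr rfl fun j _ => ?_
      rw [deriv_const_mul _ ((hFd (j:ℕ)).differentiableAt)]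
      congr 1
      rw [hF]
      rw [← iteratedDeriv_succ]
    have hd2 : (fun t => ∑ j : Fin m, c j * F ((j:ℕ)+1) t)
        = ∑ j : Fin m, c j • F ((j:ℕ)+1) := by
      funext t; simp [Finset.sum_apply]
    rw [hd, hd2]
    exact Submodule.sum_mem _ fun j _ => Submodule.smul_mem _ _ (hsucc _ j.isLt)
  have hall : ∀ n, m ≤ n → F n ∈ V := by
    intro n hn
    induction n, hn using Nat.le_induction with
    | base => exact hmem
    | succ n hn ih =>
      have : F (n+1) = fun t => deriv (F n) t := by
        simp only [hF]
        rw [iteratedDeriv_succ]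
      rw [this]
      exact hderiv_mem _ ih
  have hK : F K ∈ Submodule.span ℝ (Set.range fun j : Fin K => F (j:ℕ)) := by
    refine Submodule.span_mono ?_ (hall K hmK)
    rintro _ ⟨j, rfl⟩
    exact ⟨⟨(j:ℕ), lt_of_lt_of_le j.isLt hmK⟩, rfl⟩
  rw [mem_span_range_iff_exists_fun] at hK
  obtain ⟨a, ha⟩ := hK
  refine ⟨a, fun t => ?_⟩
  have := congrFun ha t
  simp only [Finset.sum_apply, Pi.smul_apply, smul_eq_mul] at this
  exact this.symm
end

section
/- If x : ℝ → ℝ is continuous and periodic with period 1, and x(t) = Σ_{k=1}^∞ c_k sin(2kπt) (uniformly convergent) with all c_k ≠ 0, then the only continuous 1-periodic odd function β with ∫_0^1 x(t-u) β(u) du = 0 for all t ∈ ℝ is β = 0. -/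
/-!
Taking Fourier coefficients over one period turns the periodic convolution into a product: the
`n`-th coefficient of `t ↦ ∫₀¹ x(t - u) β(u) du` is `x̂(n) β̂(n)`. Uniform convergence of the sine
series gives `x̂(±(k + 1)) = ∓ i c_k / 2 ≠ 0`, so `β̂(n) = 0` for `n ≠ 0`, and `β̂(0) = ∫₀¹ β = 0`
because `β` is odd and periodic. A continuous periodic function all of whose Fourier coefficients
vanish is zero, by completeness of the Fourier basis of `L²` of the circle.
-/

open Real Filter Function Complex MeasureTheory Topology

noncomputable def unitFourierCoeff (f : ℝ → ℂ) (n : ℤ) : ℂ :=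
  ∫ t in (0 : ℝ)..1, fourier (-n) (t : UnitAddCircle) * f t

@[fun_prop]
lemma continuous_fourier_coe {T : ℝ} (n : ℤ) :
    Continuous fun t : ℝ => fourier n (t : AddCircle T) :=
  (fourier n).continuous.comp continuous_quotient_mk'

lemma norm_fourier_coe {T : ℝ} (n : ℤ) (t : ℝ) : ‖fourier n (t : AddCircle T)‖ = 1 := by
  rw [fourier_apply, Circle.norm_coe]

lemma fourier_coe_add {T : ℝ} (n : ℤ) (s t : ℝ) :
    fourier n ((s + t : ℝ) : AddCircle T) =
      fourier n (s : AddCircle T) * fourier n (t : AddCircle T) := by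
  rw [AddCircle.coe_add, fourier_apply, smul_add, AddCircle.toCircle_add, Circle.coe_mul,
    fourier_apply, fourier_apply]

lemma unitFourierCoeff_sum {ι : Type*} (s : Finset ι) (f : ι → ℝ → ℂ)
    (hf : ∀ i ∈ s, Continuous (f i)) (n : ℤ) :
    unitFourierCoeff (fun t => ∑ i ∈ s, f i t) n = ∑ i ∈ s, unitFourierCoeff (f i) n := by
  simp_rw [unitFourierCoeff, Finset.mul_sum]
  exact intervalIntegral.integral_finsetSum fun i hi =>
    ((continuous_fourier_coe _).mul (hf i hi)).intervalIntegrable _ _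

lemma unitFourierCoeff_sub {f g : ℝ → ℂ} (hf : Continuous f) (hg : Continuous g) (n : ℤ) :
    unitFourierCoeff (fun t => f t - g t) n = unitFourierCoeff f n - unitFourierCoeff g n := by
  simp_rw [unitFourierCoeff, mul_sub]
  exact intervalIntegral.integral_sub (((continuous_fourier_coe _).mul hf).intervalIntegrable _ _)
    (((continuous_fourier_coe _).mul hg).intervalIntegrable _ _)

lemma unitFourierCoeff_const_mul (a : ℂ) (f : ℝ → ℂ) (n : ℤ) :
    unitFourierCoeff (fun t => a * f t) n = a * unitFourierCoeff f n := by
  simp_rw [unitFourierCoeff, mul_left_comm _ a, intervalIntegral.integral_const_mul]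

lemma unitFourierCoeff_zero (f : ℝ → ℂ) : unitFourierCoeff f 0 = ∫ t in (0 : ℝ)..1, f t := by
  simp [unitFourierCoeff]

lemma fourierCoeff_eq_unitFourierCoeff (F : UnitAddCircle → ℂ) (n : ℤ) :
    fourierCoeff F n = unitFourierCoeff (fun t => F t) n := by
  simp [fourierCoeff_eq_intervalIntegral F n 0, unitFourierCoeff]

lemma unitFourierCoeff_fourier (m n : ℤ) :
    unitFourierCoeff (fun t => fourier m (t : UnitAddCircle)) n = if n = m then 1 else 0 := by
  rw [← fourierCoeff_eq_unitFourierCoeff, fourierCoeff_fourier, Pi.single_apply]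

lemma tendsto_unitFourierCoeff_of_tendstoUniformly {ι : Type*} {l : Filter ι}
    [l.IsCountablyGenerated] {F : ι → ℝ → ℂ} {f : ℝ → ℂ} (hF : ∀ i, Continuous (F i))
    (h : TendstoUniformly F f l) (n : ℤ) :
    Tendsto (fun i => unitFourierCoeff (F i) n) l (𝓝 (unitFourierCoeff f n)) := by
  have hmul : TendstoUniformly (fun i (t : ℝ) => fourier (-n) (t : UnitAddCircle) * F i t)
      (fun t : ℝ => fourier (-n) (t : UnitAddCircle) * f t) l := by
    rw [Metric.tendstoUniformly_iff] at h ⊢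
    refine fun ε hε => (h ε hε).mono fun i hi t => ?_
    rw [dist_eq_norm, ← mul_sub, norm_mul, norm_fourier_coe, one_mul, ← dist_eq_norm]
    exact hi t
  exact hmul.tendstoUniformlyOn.tendsto_intervalIntegral_of_continuousOn
    (.of_forall fun i => by fun_prop)

lemma ofReal_sin_eq_fourier (m : ℤ) (t : ℝ) :
    (Real.sin (2 * m * π * t) : ℂ) =
      (fourier (-m) (t : UnitAddCircle) - fourier m (t : UnitAddCircle)) * I / 2 := by
  rw [fourier_coe_apply, fourier_coe_apply, ofReal_sin, Complex.sin]
  push_cast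
  ring_nf

lemma unitFourierCoeff_sin (m n : ℤ) :
    unitFourierCoeff (fun t => (Real.sin (2 * m * π * t) : ℂ)) n =
      ((if n = -m then 1 else 0) - if n = m then 1 else 0) * I / 2 := by
  have hcoeff : ∀ k : ℤ, unitFourierCoeff (fun t => fourier k (t : UnitAddCircle) * (I / 2)) n =
      (if n = k then 1 else 0) * (I / 2) := fun k => by
    simp_rw [mul_comm _ (I / 2), unitFourierCoeff_const_mul, unitFourierCoeff_fourier]
  simp_rw [ofReal_sin_eq_fourier, mul_div_assoc, sub_mul]
  rw [unitFourierCoeff_sub (by fun_prop) (by fun_prop), hcoeff, hcoeff]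

lemma unitFourierCoeff_sineSum (c : ℕ → ℝ) (N : ℕ) (n : ℤ) :
    unitFourierCoeff
        (fun t => ((∑ k ∈ Finset.range N, c k * Real.sin (2 * (k + 1) * π * t) : ℝ) : ℂ)) n =
      ∑ k ∈ Finset.range N,
        c k * (((if n = -(k + 1) then 1 else 0) - if n = k + 1 then 1 else 0) * I / 2) := by
  simp_rw [ofReal_sum]
  rw [unitFourierCoeff_sum _ _ fun k _ => by fun_prop]
  refine Finset.sum_congr rfl fun k _ => ?_
  have hsin := unitFourierCoeff_sin (k + 1) n
  push_cast at hsin ⊢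
  rw [unitFourierCoeff_const_mul, hsin]

lemma unitFourierCoeff_ne_zero_of_sineSeries {x : ℝ → ℝ} {c : ℕ → ℝ}
    (hconv : TendstoUniformly
      (fun N t => ∑ k ∈ Finset.range N, c k * Real.sin (2 * (k + 1) * π * t)) x atTop)
    (hc : ∀ k, c k ≠ 0) {n : ℤ} (hn : n ≠ 0) : unitFourierCoeff (fun t => (x t : ℂ)) n ≠ 0 := by
  obtain ⟨j, hj⟩ : ∃ j : ℕ, n.natAbs = j + 1 := ⟨n.natAbs - 1, by omega⟩
  -- only the term `k = j` of a partial sum has frequency `±n`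
  set v : ℂ := c j * (((if n = -(j + 1) then 1 else 0) - if n = j + 1 then 1 else 0) * I / 2)
  have hpartial : ∀ N, j < N → unitFourierCoeff
      (fun t => ((∑ k ∈ Finset.range N, c k * Real.sin (2 * (k + 1) * π * t) : ℝ) : ℂ)) n = v := by
    intro N hN
    rw [unitFourierCoeff_sineSum, Finset.sum_eq_single j]
    · intro k _ hk
      rw [if_neg (by omega), if_neg (by omega)]
      simp
    · simp only [Finset.mem_range]
      omega
  have hlim := tendsto_unitFourierCoeff_of_tendstoUniformly (fun N => by fun_prop)
    (Complex.isometry_ofReal.uniformContinuous.comp_tendstoUniformly hconv) n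
  have hx : unitFourierCoeff (fun t => (x t : ℂ)) n = v :=
    tendsto_nhds_unique hlim <| tendsto_const_nhds.congr' <|
      eventually_atTop.2 ⟨j + 1, fun N hN => (hpartial N hN).symm⟩
  rw [hx]
  refine mul_ne_zero (ofReal_ne_zero.mpr (hc j))
    (div_ne_zero (mul_ne_zero ?_ I_ne_zero) two_ne_zero)
  rcases Int.natAbs_eq n with h | h
  · rw [if_neg (by omega), if_pos (by omega)]
    norm_num
  · rw [if_pos (by omega), if_neg (by omega)]
    norm_num

lemma unitFourierCoeff_comp_sub {f : ℝ → ℂ} (hf : Periodic f 1) (u : ℝ) (n : ℤ) :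
    unitFourierCoeff (fun t => f (t - u)) n =
      fourier (-n) (u : UnitAddCircle) * unitFourierCoeff f n := by
  set g : ℝ → ℂ := fun s => fourier (-n) (s : UnitAddCircle) * f s
  have hg : Periodic g 1 := fun s => by simp only [g, hf s, AddCircle.coe_add_period]
  calc unitFourierCoeff (fun t => f (t - u)) n
      = fourier (-n) (u : UnitAddCircle) * ∫ t in (0 : ℝ)..1, g (t - u) := by
        rw [unitFourierCoeff, ← intervalIntegral.integral_const_mul]
        congr 1 with t
        rw [← mul_assoc, ← fourier_coe_add, add_sub_cancel]
    _ = fourier (-n) (u : UnitAddCircle) * unitFourierCoeff f n := by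
        rw [intervalIntegral.integral_comp_sub_right, zero_sub, sub_eq_neg_add,
          hg.intervalIntegral_add_eq (-u) 0, zero_add]
        rfl

theorem unitFourierCoeff_conv {f g : ℝ → ℂ} (hf : Continuous f) (hper : Periodic f 1)
    (hg : Continuous g) (n : ℤ) :
    unitFourierCoeff (fun t => ∫ u in (0 : ℝ)..1, f (t - u) * g u) n =
      unitFourierCoeff f n * unitFourierCoeff g n := by
  have hint : IntegrableOn
      (uncurry fun t u : ℝ => fourier (-n) (t : UnitAddCircle) * (f (t - u) * g u))
      (Set.uIoc 0 1 ×ˢ Set.uIoc 0 1) :=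
    ((by fun_prop : Continuous _).continuousOn.integrableOn_compact
      (isCompact_uIcc.prod isCompact_uIcc)).mono_set
      (Set.prod_mono Set.uIoc_subset_uIcc Set.uIoc_subset_uIcc)
  calc unitFourierCoeff (fun t => ∫ u in (0 : ℝ)..1, f (t - u) * g u) n
      = ∫ u in (0 : ℝ)..1, ∫ t in (0 : ℝ)..1,
          fourier (-n) (t : UnitAddCircle) * (f (t - u) * g u) := by
        simp_rw [unitFourierCoeff, ← intervalIntegral.integral_const_mul]
        exact intervalIntegral_intervalIntegral_swap hint
    _ = ∫ u in (0 : ℝ)..1, fourier (-n) (u : UnitAddCircle) * g u * unitFourierCoeff f n := by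
        congr 1 with u
        simp_rw [← mul_assoc, intervalIntegral.integral_mul_const]
        rw [← unitFourierCoeff, unitFourierCoeff_comp_sub hper]
        ring
    _ = unitFourierCoeff f n * unitFourierCoeff g n := by
        rw [intervalIntegral.integral_mul_const, mul_comm]
        rfl

theorem eq_zero_of_unitFourierCoeff_eq_zero {f : ℝ → ℂ} (hf : Continuous f) (hper : Periodic f 1)
    (h : ∀ n, unitFourierCoeff f n = 0) : f = 0 := by
  let F : C(UnitAddCircle, ℂ) := ⟨hper.lift, continuous_coinduced_dom.mpr hf⟩
  have hF : F = 0 := by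
    apply ContinuousMap.toLp_injective (μ := AddCircle.haarAddCircle) (p := 2) (𝕜 := ℂ)
    apply fourierBasis.repr.injective
    ext n
    rw [fourierBasis_repr, fourierCoeff_toLp, map_zero, map_zero]
    simpa [fourierCoeff_eq_unitFourierCoeff, F] using h n
  funext t
  simpa [F] using DFunLike.congr_fun hF (t : UnitAddCircle)

theorem Function.Periodic.intervalIntegral_eq_zero_of_odd {E : Type*} [NormedAddCommGroup E]
    [NormedSpace ℝ E] {f : ℝ → E} {T : ℝ} (hper : Periodic f T) (hodd : ∀ t, f (-t) = -f t) :
    ∫ t in (0 : ℝ)..T, f t = 0 := by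
  have hshift := hper.intervalIntegral_add_eq (-T) 0
  rw [neg_add_cancel, zero_add] at hshift
  have hreflect := intervalIntegral.integral_comp_neg (a := 0) (b := T) f
  simp only [hodd, intervalIntegral.integral_neg, neg_zero, hshift, neg_eq_iff_add_eq_zero,
    ← two_smul ℝ] at hreflect
  exact (smul_eq_zero.mp hreflect).resolve_left two_ne_zero

theorem stmt12 (x β : ℝ → ℝ) (c : ℕ → ℝ)
    (hxc : Continuous x) (hxp : ∀ t, x (t + 1) = x t)
    (hconv : TendstoUniformly
      (fun N t => ∑ k ∈ Finset.range N, c k * Real.sin (2 * (k + 1) * π * t)) x atTop)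
    (hc : ∀ k, c k ≠ 0)
    (hβc : Continuous β) (hβp : ∀ t, β (t + 1) = β t) (hβodd : ∀ t, β (-t) = -β t)
    (horth : ∀ t : ℝ, (∫ u in (0:ℝ)..1, x (t - u) * β u) = 0) :
    β = 0 := by
  suffices hβ : (fun t => (β t : ℂ)) = 0 by
    funext t
    simpa using congrFun hβ t
  refine eq_zero_of_unitFourierCoeff_eq_zero (by fun_prop) (fun t => by simp [hβp]) fun n => ?_
  rcases eq_or_ne n 0 with rfl | hn
  · rw [unitFourierCoeff_zero, intervalIntegral.integral_ofReal,
      Periodic.intervalIntegral_eq_zero_of_odd hβp hβodd, ofReal_zero]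
  have hprod := unitFourierCoeff_conv (f := fun t => (x t : ℂ)) (g := fun t => (β t : ℂ))
    (by fun_prop) (fun t => by simp [hxp]) (by fun_prop) n
  have hconv_zero : ∀ t, ∫ u in (0 : ℝ)..1, (x (t - u) : ℂ) * β u = 0 := fun t => by
    exact_mod_cast intervalIntegral.integral_ofReal.trans (congrArg ((↑) : ℝ → ℂ) (horth t))
  have hzero : unitFourierCoeff (fun t => ∫ u in (0 : ℝ)..1, (x (t - u) : ℂ) * β u) n = 0 := by
    simp [unitFourierCoeff, hconv_zero]
  rw [hzero] at hprod
  exact (mul_eq_zero.mp hprod.symm).resolve_left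
    (unitFourierCoeff_ne_zero_of_sineSeries hconv hc hn)
end

section
/- If V is a finite-dimensional subspace of C^∞(ℝ,ℝ) that is translation-invariant (f ∈ V implies t ↦ f(t+s) ∈ V for all s), then V is closed under differentiation: f ∈ V implies f' ∈ V. -/
theorem stmt15 (V : Submodule ℝ (ℝ → ℝ))
    (hsmooth : ∀ f ∈ V, ContDiff ℝ (⊤ : ℕ∞) f)
    (hfin : FiniteDimensional ℝ V)
    (htrans : ∀ f ∈ V, ∀ s : ℝ, (fun t => f (t + s)) ∈ V) :
    ∀ f ∈ V, deriv f ∈ V := by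
  intro f hf
  haveI := hfin
  have hclosed : IsClosed (V : Set (ℝ → ℝ)) := Submodule.closed_of_finiteDimensional V
  have hmem : ∀ h : ℝ, (fun t => h⁻¹ • (f (t + h) - f t)) ∈ V := by
    intro h
    have heq : (fun t => h⁻¹ • (f (t + h) - f t))
        = h⁻¹ • ((fun t => f (t + h)) - f) := by
      funext t; simp
    rw [heq]
    exact V.smul_mem _ (V.sub_mem (htrans f hf h) hf)
  have hdiff : Differentiable ℝ f := (hsmooth f hf).differentiable (by simp)
  have htend : Filter.Tendsto (fun h : ℝ => fun t => h⁻¹ • (f (t + h) - f t))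
      (nhdsWithin 0 {(0:ℝ)}ᶜ) (nhds (deriv f)) := by
    rw [tendsto_pi_nhds]
    intro t
    exact hasDerivAt_iff_tendsto_slope_zero.mp (hdiff t).hasDerivAt
  exact hclosed.mem_of_tendsto htend
    (Filter.eventually_of_mem self_mem_nhdsWithin fun h _ => hmem h)
end
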